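/- There is an absolute constant c > 0 (one may take c = 2/π²) with the following property. Let p, ξ ∈ ℝ² with p ≠ 0, ξ ≠ 0 and |ξ| ≤ 1, and let θ ∈ [0,π] be defined by cos θ = −(p̂·ξ)/(|p̂||ξ|). Then the three lower bounds hold: 1 + p̂·ξ ≥ c θ², 1 + p̂·ξ ≥ c (1 − |ξ|²), and 1 + p̂·ξ ≥ c / p_0². Equivalently, (1 + p̂·ξ)^{−1} ≤ c^{−1} min{ θ^{−2}, (1 − |ξ|²)^{−1}, p_0² }. -/

import Mathlib

open scoped RealInnerProductSpace

/-- `p₀ = √(1 + |p|²)` for `p ∈ ℝ²`. -/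
noncomputable def pZero (p : EuclideanSpace ℝ (Fin 2)) : ℝ := Real.sqrt (1 + ‖p‖ ^ 2)

/-- `p̂ = p / p₀` for `p ∈ ℝ²`. -/
noncomputable def pHat (p : EuclideanSpace ℝ (Fin 2)) : EuclideanSpace ℝ (Fin 2) :=
  (pZero p)⁻¹ • p

/-!
Writing `θ` for the angle between `p̂` and `-ξ`, the factor is `1 + p̂·ξ = 1 - |p̂||ξ| cos θ` with
`|p̂||ξ| ≤ 1`. It is a convex combination of `1` and `1 - cos θ ≥ 2θ²/π²`, hence at least `θ²/π²`.
By Cauchy–Schwarz it is also at least `1 - |ξ| ≥ (1 - |ξ|²)/2` and at least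
`1 - |p|/p₀ = 1/(p₀(p₀ + |p|)) ≥ 1/(2p₀²)`. So `c = 1/π²` works for all three bounds.
-/

open Real InnerProductGeometry

theorem sq_div_pi_sq_le_one_sub_mul_cos {r θ : ℝ} (hr₀ : 0 ≤ r) (hr₁ : r ≤ 1) (hθ : |θ| ≤ π) :
    θ ^ 2 / π ^ 2 ≤ 1 - r * cos θ := by
  have hθπ : θ ^ 2 / π ^ 2 ≤ 1 :=
    div_le_one_of_le₀ (sq_le_sq' (abs_le.mp hθ).1 (abs_le.mp hθ).2) (sq_nonneg π)
  have hcos : 2 * (θ ^ 2 / π ^ 2) ≤ 1 - cos θ := by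
    have := cos_le_one_sub_mul_cos_sq hθ
    rw [div_mul_eq_mul_div, mul_div_assoc] at this
    linarith
  -- `1 - r cos θ - θ²/π² = (1 - r)(1 - θ²/π²) + r(1 - cos θ - θ²/π²)`
  nlinarith [mul_nonneg (sub_nonneg.mpr hr₁) (sub_nonneg.mpr hθπ),
    mul_nonneg hr₀ (div_nonneg (sq_nonneg θ) (sq_nonneg π))]

section InnerProductSpace

variable {V : Type*} [NormedAddCommGroup V] [InnerProductSpace ℝ V]

theorem arccos_neg_inner_div_eq_angle_neg (u v : V) :
    arccos (-⟪u, v⟫ / (‖u‖ * ‖v‖)) = angle u (-v) := by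
  rw [angle, inner_neg_right, norm_neg]

theorem one_add_inner_eq_one_sub_mul_cos_angle_neg (u v : V) :
    1 + ⟪u, v⟫ = 1 - ‖u‖ * ‖v‖ * cos (angle u (-v)) := by
  have := cos_angle_mul_norm_mul_norm u (-v)
  rw [inner_neg_right, norm_neg] at this
  linarith

theorem angle_neg_sq_div_pi_sq_le_one_add_inner {u v : V} (hu : ‖u‖ ≤ 1) (hv : ‖v‖ ≤ 1) :
    angle u (-v) ^ 2 / π ^ 2 ≤ 1 + ⟪u, v⟫ := by
  rw [one_add_inner_eq_one_sub_mul_cos_angle_neg]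
  refine sq_div_pi_sq_le_one_sub_mul_cos (by positivity) (mul_le_one₀ hu (norm_nonneg v) hv) ?_
  rw [abs_of_nonneg (angle_nonneg u (-v))]
  exact angle_le_pi u (-v)

theorem one_sub_norm_le_one_add_inner (u : V) {v : V} (hv : ‖v‖ ≤ 1) :
    1 - ‖u‖ ≤ 1 + ⟪u, v⟫ := by
  have hcs := neg_le_of_abs_le (abs_real_inner_le_norm u v)
  nlinarith [norm_nonneg u]

theorem half_one_sub_sq_norm_le_one_add_inner {u : V} (hu : ‖u‖ ≤ 1) (v : V) :
    1 / 2 * (1 - ‖v‖ ^ 2) ≤ 1 + ⟪u, v⟫ := by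
  have := one_sub_norm_le_one_add_inner v hu
  rw [real_inner_comm] at this
  nlinarith [sq_nonneg (1 - ‖v‖)]

end InnerProductSpace

theorem pZero_pos (p : EuclideanSpace ℝ (Fin 2)) : 0 < pZero p :=
  sqrt_pos.mpr (by positivity)

theorem sq_pZero (p : EuclideanSpace ℝ (Fin 2)) : pZero p ^ 2 = 1 + ‖p‖ ^ 2 :=
  sq_sqrt (by positivity)

theorem norm_pHat (p : EuclideanSpace ℝ (Fin 2)) : ‖pHat p‖ = ‖p‖ / pZero p := by
  rw [pHat, norm_smul, norm_inv, norm_of_nonneg (pZero_pos p).le, inv_mul_eq_div]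

theorem norm_le_pZero (p : EuclideanSpace ℝ (Fin 2)) : ‖p‖ ≤ pZero p :=
  le_sqrt_of_sq_le (le_add_of_nonneg_left zero_le_one)

theorem norm_pHat_le_one (p : EuclideanSpace ℝ (Fin 2)) : ‖pHat p‖ ≤ 1 := by
  rw [norm_pHat]
  exact div_le_one_of_le₀ (norm_le_pZero p) (pZero_pos p).le

theorem half_div_sq_pZero_le_one_sub_norm_pHat (p : EuclideanSpace ℝ (Fin 2)) :
    1 / 2 / pZero p ^ 2 ≤ 1 - ‖pHat p‖ := by
  have hs := pZero_pos p
  rw [norm_pHat, div_le_iff₀ (by positivity), sub_mul, div_mul_eq_mul_div, mul_div_assoc,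
    pow_two (pZero p), ← mul_assoc, mul_div_cancel_right₀ _ hs.ne']
  -- `2 p₀² - 2 |p| p₀ - 1 = (p₀ - |p|)²` since `p₀² = 1 + |p|²`
  nlinarith [sq_pZero p, sq_nonneg (pZero p - ‖p‖)]

/-- **Lower bounds for the null-form factor `1 + p̂·ξ`.**  There is an absolute constant
`c > 0` (one may take `c = 2/π²`) such that for `p ≠ 0`, `ξ ≠ 0`, `|ξ| ≤ 1`, with
`θ ∈ [0,π]` defined by `cos θ = −(p̂·ξ)/(|p̂||ξ|)`, one has
`1 + p̂·ξ ≥ c θ²`, `1 + p̂·ξ ≥ c (1 − |ξ|²)` and `1 + p̂·ξ ≥ c / p₀²`. -/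
theorem null_factor_lower_bounds :
    ∃ c : ℝ, 0 < c ∧
      ∀ (p ξ : EuclideanSpace ℝ (Fin 2)), p ≠ 0 → ξ ≠ 0 → ‖ξ‖ ≤ 1 →
        ∀ θ : ℝ, θ = Real.arccos (-(⟪pHat p, ξ⟫) / (‖pHat p‖ * ‖ξ‖)) →
          c * θ ^ 2 ≤ 1 + ⟪pHat p, ξ⟫
          ∧ c * (1 - ‖ξ‖ ^ 2) ≤ 1 + ⟪pHat p, ξ⟫
          ∧ c / pZero p ^ 2 ≤ 1 + ⟪pHat p, ξ⟫ := by
  refine ⟨1 / π ^ 2, by positivity, fun p ξ _ _ hξ θ hθ => ?_⟩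
  rw [arccos_neg_inner_div_eq_angle_neg] at hθ
  subst hθ
  have hc : 1 / π ^ 2 ≤ 1 / 2 :=
    one_div_le_one_div_of_le two_pos (by nlinarith [pi_gt_three])
  refine ⟨?_, ?_, ?_⟩
  · rw [one_div_mul_eq_div]
    exact angle_neg_sq_div_pi_sq_le_one_add_inner (norm_pHat_le_one p) hξ
  · have hξ₂ : 0 ≤ 1 - ‖ξ‖ ^ 2 := by nlinarith [norm_nonneg ξ]
    exact (mul_le_mul_of_nonneg_right hc hξ₂).trans
      (half_one_sub_sq_norm_le_one_add_inner (norm_pHat_le_one p) ξ)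
  · calc 1 / π ^ 2 / pZero p ^ 2 ≤ 1 / 2 / pZero p ^ 2 := by gcongr
      _ ≤ 1 - ‖pHat p‖ := half_div_sq_pZero_le_one_sub_norm_pHat p
      _ ≤ 1 + ⟪pHat p, ξ⟫ := one_sub_norm_le_one_add_inner _ hξ
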